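/- arXiv:2302.13182 — 2 statements merged into one kernel-verified Lean document; each statement's English description precedes it below -/
import Mathlib

section
/- Let K be a commutative ring and let ℓ ≥ 1. For a formal power series f ∈ K[[X]] that is ℓ-tangent to the identity, define the additive residue Resad̄_ℓ(f) := (ℓ+1)·a_{ℓ+1}² − 2·a_{2ℓ+1}, where a_n denotes the coefficient of X^n in f. Then for any two power series f, g ∈ K[[X]] that are ℓ-tangent to the identity, Resad̄_ℓ(f∘g) = Resad̄_ℓ(f) + Resad̄_ℓ(g); that is, Resad̄_ℓ is additive under formal composition (a group homomorphism from the group of formal series ℓ-tangent to the identity to the additive group of K). -/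
/-- Formal composition (substitution) `f ∘ g` of power series, meaningful when `g`
has zero constant coefficient: the coefficient of `X^n` in `f ∘ g` is
`∑_{k ≤ n} a_k · (coefficient of X^n in g^k)`. -/
noncomputable def psComp {K : Type*} [CommRing K] (f g : PowerSeries K) : PowerSeries K :=
  PowerSeries.mk fun n => ∑ k ∈ Finset.range (n + 1),
    PowerSeries.coeff k f * PowerSeries.coeff n (g ^ k)

/-- A formal power series is `ℓ`-tangent to the identity if its constant coefficient is `0`,
its linear coefficient is `1`, and its coefficient of `X^n` vanishes for `2 ≤ n ≤ ℓ`. -/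
def IsTangentToId {K : Type*} [CommRing K] (ℓ : ℕ) (f : PowerSeries K) : Prop :=
  PowerSeries.coeff 0 f = 0 ∧ PowerSeries.coeff 1 f = 1 ∧
    ∀ n, 2 ≤ n → n ≤ ℓ → PowerSeries.coeff n f = 0
/-- The additive residue at order `ℓ+1`:
`Resad̄_ℓ(f) = (ℓ+1)·a_{ℓ+1}² − 2·a_{2ℓ+1}`. -/
noncomputable def resadBar {K : Type*} [CommRing K] (ℓ : ℕ) (f : PowerSeries K) : K :=
  (ℓ + 1 : K) * (PowerSeries.coeff (ℓ + 1) f) ^ 2 - 2 * PowerSeries.coeff (2 * ℓ + 1) f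

/-!
Write `g = X + h`; tangency to order `ℓ` means `X^(ℓ+1) ∣ h`. Since `(X + h)^k` equals
`X^k + k X^(k-1) h` modulo `h^2`, hence modulo `X^(2ℓ+2)`, the coefficients of `f ∘ g` up to
degree `2ℓ+1` are those of `f + f'·h`. With `a, b, c` the coefficients of `f, g, f ∘ g`, tangency
leaves only the terms `k = 1` and `k = ℓ+1` of `f' = ∑ k a_k X^(k-1)`, which give
`c_{ℓ+1} = a_{ℓ+1} + b_{ℓ+1}` and `c_{2ℓ+1} = a_{2ℓ+1} + (ℓ+1) a_{ℓ+1} b_{ℓ+1} + b_{2ℓ+1}`.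
The cross term `2(ℓ+1) a_{ℓ+1} b_{ℓ+1}` in `(ℓ+1) c_{ℓ+1}^2` is cancelled by `2 c_{2ℓ+1}`.
-/
open PowerSeries

section

variable {K : Type*} [CommRing K]

theorem coeff_sub_X_of_ne_one {m : ℕ} {g : K⟦X⟧} (hm : m ≠ 1) : coeff m (g - X) = coeff m g := by
  rw [map_sub, coeff_X, if_neg hm, sub_zero]

namespace IsTangentToId

theorem coeff_eq_zero {ℓ k : ℕ} {f : K⟦X⟧} (hf : IsTangentToId ℓ f) (hk : k ≠ 1)
    (hkℓ : k ≤ ℓ) : coeff k f = 0 := by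
  obtain ⟨hf0, -, hfn⟩ := hf
  rcases Nat.lt_or_ge k 2 with hk2 | hk2
  · obtain rfl : k = 0 := by omega
    exact hf0
  · exact hfn k hk2 hkℓ

theorem X_pow_dvd_sub_X {ℓ : ℕ} {g : K⟦X⟧} (hg : IsTangentToId ℓ g) :
    X ^ (ℓ + 1) ∣ g - X := by
  refine X_pow_dvd_iff.mpr fun m hm => ?_
  by_cases hm1 : m = 1
  · simp [hm1, hg.2.1]
  · rw [coeff_sub_X_of_ne_one hm1, hg.coeff_eq_zero hm1 (by omega)]

end IsTangentToId

theorem coeff_pow_of_X_pow_dvd_sub_X {ℓ n : ℕ} {g : K⟦X⟧} (hg : X ^ (ℓ + 1) ∣ g - X)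
    (hn : n < 2 * ℓ + 2) (k : ℕ) :
    coeff n (g ^ k) = coeff n (X ^ k) + k * coeff n (X ^ (k - 1) * (g - X)) := by
  obtain ⟨r, hr⟩ := Polynomial.powAddExpansion X (g - X) k
  have hsq : X ^ (2 * ℓ + 2) ∣ r * (g - X) ^ 2 := by
    refine Dvd.dvd.mul_left ?_ r
    rw [show 2 * ℓ + 2 = (ℓ + 1) * 2 by ring, pow_mul]
    exact pow_dvd_pow_of_dvd hg 2
  rw [add_sub_cancel] at hr
  rw [hr, map_add, X_pow_dvd_iff.mp hsq n hn, add_zero, map_add, mul_assoc,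
    ← map_natCast (C (R := K)), coeff_C_mul]

theorem coeff_psComp_of_X_pow_dvd_sub_X {ℓ n : ℕ} (f : K⟦X⟧) {g : K⟦X⟧}
    (hg : X ^ (ℓ + 1) ∣ g - X) (hn : n < 2 * ℓ + 2) :
    coeff n (psComp f g) = coeff n f +
      ∑ k ∈ Finset.range (n + 1), k * coeff k f * coeff n (X ^ (k - 1) * (g - X)) := by
  simp [psComp, coeff_pow_of_X_pow_dvd_sub_X hg hn, coeff_X_pow, mul_add,
    Finset.sum_add_distrib, mul_assoc, mul_left_comm]

theorem natCast_mul_coeff_mul_coeff_X_pow_mul_sub_X_eq_zero {ℓ n k : ℕ} {f g : K⟦X⟧}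
    (hf : IsTangentToId ℓ f) (hg : X ^ (ℓ + 1) ∣ g - X) (hk : k ≠ 1) (hkn : k ≤ ℓ ∨ n < k + ℓ) :
    (k : K) * coeff k f * coeff n (X ^ (k - 1) * (g - X)) = 0 := by
  rcases Nat.eq_zero_or_pos k with rfl | hk0
  · simp
  rcases hkn with hkℓ | hnk
  · rw [hf.coeff_eq_zero hk hkℓ, mul_zero, zero_mul]
  · have hdvd : X ^ (k + ℓ) ∣ X ^ (k - 1) * (g - X) := by
      rw [show k + ℓ = (k - 1) + (ℓ + 1) by omega, pow_add]
      exact mul_dvd_mul_left _ hg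
    rw [X_pow_dvd_iff.mp hdvd n hnk, mul_zero]

theorem coeff_succ_psComp {ℓ : ℕ} (hℓ : 1 ≤ ℓ) {f g : K⟦X⟧} (hf : IsTangentToId ℓ f)
    (hg : IsTangentToId ℓ g) :
    coeff (ℓ + 1) (psComp f g) = coeff (ℓ + 1) f + coeff (ℓ + 1) g := by
  have hdvd := hg.X_pow_dvd_sub_X
  rw [coeff_psComp_of_X_pow_dvd_sub_X f hdvd (by omega), Finset.sum_eq_single 1
    (fun k hk hk1 => natCast_mul_coeff_mul_coeff_X_pow_mul_sub_X_eq_zero hf hdvd hk1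
      (by rw [Finset.mem_range] at hk; omega)) (by simp)]
  rw [hf.2.1, Nat.sub_self, pow_zero, one_mul, coeff_sub_X_of_ne_one (by omega)]
  push_cast
  ring

theorem coeff_two_mul_add_one_psComp {ℓ : ℕ} (hℓ : 1 ≤ ℓ) {f g : K⟦X⟧} (hf : IsTangentToId ℓ f)
    (hg : IsTangentToId ℓ g) :
    coeff (2 * ℓ + 1) (psComp f g) = coeff (2 * ℓ + 1) f +
      (ℓ + 1) * coeff (ℓ + 1) f * coeff (ℓ + 1) g + coeff (2 * ℓ + 1) g := by
  have hdvd := hg.X_pow_dvd_sub_X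
  rw [coeff_psComp_of_X_pow_dvd_sub_X f hdvd (by omega), Finset.sum_eq_add 1 (ℓ + 1) (by omega)
    (fun k hk hk1 => natCast_mul_coeff_mul_coeff_X_pow_mul_sub_X_eq_zero hf hdvd hk1.1
      (by rw [Finset.mem_range] at hk; omega)) (by simp)
    (fun h => (h (Finset.mem_range.mpr (by omega))).elim)]
  rw [hf.2.1, Nat.sub_self, pow_zero, one_mul, Nat.add_sub_cancel, coeff_X_pow_mul',
    if_pos (by omega), show 2 * ℓ + 1 - ℓ = ℓ + 1 by omega, coeff_sub_X_of_ne_one (by omega),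
    coeff_sub_X_of_ne_one (by omega)]
  push_cast
  ring

end

theorem stmt_1 {K : Type*} [CommRing K] (ℓ : ℕ) (hℓ : 1 ≤ ℓ)
    (f g : PowerSeries K) (hf : IsTangentToId ℓ f) (hg : IsTangentToId ℓ g) :
    resadBar ℓ (psComp f g) = resadBar ℓ f + resadBar ℓ g := by
  rw [resadBar, resadBar, resadBar, coeff_succ_psComp hℓ hf hg,
    coeff_two_mul_add_one_psComp hℓ hf hg]
  ring
end

section
/- Let K be a field of characteristic zero, let ℓ ≥ 1, and let μ, ν ∈ K. Set N_μ := X + X^{ℓ+1} + μ·X^{2ℓ+1} and N_ν := X + X^{ℓ+1} + ν·X^{2ℓ+1} in K[[X]]. If there exists a formal power series h ∈ K[[X]] with constant coefficient 0 and nonzero linear coefficient such that h∘N_μ = N_ν∘h, then μ = ν. (The residue μ in the formal normal form X + X^{ℓ+1} + μX^{2ℓ+1} is uniquely determined by the formal conjugacy class.) -/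
open PowerSeries Finset

namespace PowerSeries

variable {R : Type*} [CommRing R]

theorem coeff_X_mul_derivative (f : R⟦X⟧) (n : ℕ) : coeff n (X * d⁄dX R f) = n * coeff n f := by
  cases n with
  | zero => simp
  | succ n => rw [coeff_succ_X_mul, coeff_derivative, mul_comm]; push_cast; ring

theorem coeff_add_pow_of_lt {m n : ℕ} (x δ : R⟦X⟧) (hδ : X ^ m ∣ δ) (hn : n < 2 * m) (k : ℕ) :
    coeff n ((x + δ) ^ k) = coeff n (x ^ (k - 1) * δ * (k : R⟦X⟧) + x ^ k) := by
  have hdvd : X ^ (2 * m) ∣ (x + δ) ^ k - x ^ (k - 1) * δ * (k : R⟦X⟧) - x ^ k := by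
    rw [mul_comm, pow_mul]
    exact (pow_dvd_pow_of_dvd hδ 2).trans (sq_dvd_add_pow_sub_sub δ x k)
  have := X_pow_dvd_iff.mp hdvd n hn
  simp only [map_sub, map_add] at this ⊢
  linear_combination this

theorem coeff_pow_succ_of_coeff_eq_zero {g : R⟦X⟧} {m : ℕ} (hm : 1 ≤ m)
    (hg : ∀ j, 1 ≤ j → j < m → coeff j g = 0) (k : ℕ) :
    coeff m (g ^ (k + 1)) = (k + 1) * constantCoeff g ^ k * coeff m g := by
  set c := constantCoeff g with hc
  obtain ⟨r, hr⟩ : X ^ m ∣ g - C c := by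
    refine X_pow_dvd_iff.mpr fun j hj => ?_
    rcases j with _ | j
    · simp [hc]
    · simp [hg (j + 1) (by omega) hj]
  rw [sub_eq_iff_eq_add'] at hr
  rw [hr, coeff_add_pow_of_lt _ _ (dvd_mul_right _ r) (by omega)]
  simp only [add_tsub_cancel_right, ← map_pow, Nat.cast_add, Nat.cast_one, mul_assoc, map_add,
    coeff_C_mul, coeff_X_pow_mul', le_refl, if_true, tsub_self, coeff_zero_eq_constantCoeff,
    map_mul, map_natCast, constantCoeff_one, coeff_C, Nat.one_le_iff_ne_zero.mp hm, if_false,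
    add_zero, zero_add]
  ring

end PowerSeries

section psComp

variable {R : Type*} [CommRing R]

theorem coeff_psComp (f g : R⟦X⟧) (n : ℕ) :
    coeff n (psComp f g) = ∑ k ∈ range (n + 1), coeff k f * coeff n (g ^ k) :=
  coeff_mk _ _

theorem psComp_add (f₁ f₂ g : R⟦X⟧) : psComp (f₁ + f₂) g = psComp f₁ g + psComp f₂ g := by
  ext n; simp only [coeff_psComp, map_add, add_mul, sum_add_distrib]

theorem psComp_C_mul (a : R) (f g : R⟦X⟧) : psComp (C a * f) g = C a * psComp f g := by
  ext n; simp only [coeff_psComp, coeff_C_mul, mul_sum, mul_assoc]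

theorem psComp_X_pow {g : R⟦X⟧} (hg : constantCoeff g = 0) (m : ℕ) : psComp (X ^ m) g = g ^ m := by
  ext n
  rw [coeff_psComp]
  simp only [coeff_X_pow, ite_mul, one_mul, zero_mul, sum_ite_eq', mem_range]
  split_ifs with hmn
  · rfl
  · exact (X_pow_dvd_iff.mp (pow_dvd_pow_of_dvd (X_dvd_iff.mpr hg) m) n (by omega)).symm

theorem coeff_psComp_X_add {m n : ℕ} (f δ : R⟦X⟧) (hδ : X ^ m ∣ δ) (hn : n < 2 * m) :
    coeff n (psComp f (X + δ)) = coeff n (f + δ * d⁄dX R f) := by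
  obtain ⟨ε, rfl⟩ : X ∣ δ := (dvd_pow_self X (by omega)).trans hδ
  have hterm : ∀ k ∈ range (n + 1), coeff k f * coeff n ((X + X * ε) ^ k)
      = coeff k f * k * coeff (n - k) ε + if n = k then coeff k f else 0 := by
    intro k hk
    have hlin : X ^ (k - 1) * (X * ε) * (k : R⟦X⟧) = C (k : R) * (X ^ k * ε) := by
      rcases k with _ | k
      · simp
      · rw [map_natCast, Nat.add_sub_cancel]; ring
    rw [coeff_add_pow_of_lt X (X * ε) hδ hn, hlin, map_add, coeff_C_mul, coeff_X_pow_mul',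
      if_pos (by simpa [Nat.lt_succ_iff] using hk), coeff_X_pow, mul_add,
      mul_ite, mul_one, mul_zero, mul_assoc]
  rw [coeff_psComp, sum_congr rfl hterm, sum_add_distrib, sum_ite_eq, if_pos (self_mem_range_succ n),
    map_add, add_comm, show X * ε * d⁄dX R f = X * d⁄dX R f * ε by ring, coeff_mul,
    Nat.sum_antidiagonal_eq_sum_range_succ_mk]
  simp only [coeff_X_mul_derivative, mul_comm (coeff _ f)]

end psComp

section NormalForm

variable {R : Type*} [CommRing R]

noncomputable def normalForm (ℓ : ℕ) (a : R) : R⟦X⟧ := X + X ^ (ℓ + 1) + C a * X ^ (2 * ℓ + 1)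

theorem psComp_normalForm {f : R⟦X⟧} (hf : constantCoeff f = 0) (ℓ : ℕ) (a : R) :
    psComp (normalForm ℓ a) f = f + f ^ (ℓ + 1) + C a * f ^ (2 * ℓ + 1) := by
  have hX : psComp X f = f := by simpa only [pow_one] using psComp_X_pow hf 1
  rw [normalForm, psComp_add, psComp_add, psComp_C_mul, hX, psComp_X_pow hf, psComp_X_pow hf]

theorem coeff_psComp_normalForm {ℓ n : ℕ} (hn : n < 2 * (ℓ + 1)) (f : R⟦X⟧) (a : R) :
    coeff n (psComp f (normalForm ℓ a)) =
      coeff n (f + (X ^ (ℓ + 1) + C a * X ^ (2 * ℓ + 1)) * d⁄dX R f) := by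
  rw [normalForm, add_assoc]
  exact coeff_psComp_X_add f _ (Dvd.intro (1 + C a * X ^ ℓ) (by ring)) hn

variable {ℓ : ℕ} {μ ν : R} {g : R⟦X⟧}

theorem coeff_eq_of_conj {i : ℕ} (hi : i ≤ ℓ)
    (hconj : psComp (X * g) (normalForm ℓ μ) = psComp (normalForm ℓ ν) (X * g)) :
    coeff i ((1 + C μ * X ^ ℓ) * d⁄dX R (X * g)) =
      coeff i (g ^ (ℓ + 1) + C ν * X ^ ℓ * g ^ (2 * ℓ + 1)) := by
  have h := coeff_psComp_normalForm (ℓ := ℓ) (n := i + (ℓ + 1)) (by omega) (X * g) μ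
  rw [hconj, psComp_normalForm (by simp)] at h
  have hl : (X ^ (ℓ + 1) + C μ * X ^ (2 * ℓ + 1)) * d⁄dX R (X * g) =
      X ^ (ℓ + 1) * ((1 + C μ * X ^ ℓ) * d⁄dX R (X * g)) := by ring
  have hr : (X * g) ^ (ℓ + 1) + C ν * (X * g) ^ (2 * ℓ + 1) =
      X ^ (ℓ + 1) * (g ^ (ℓ + 1) + C ν * X ^ ℓ * g ^ (2 * ℓ + 1)) := by ring
  rw [add_assoc, hl, hr, map_add, map_add, add_right_inj, coeff_X_pow_mul, coeff_X_pow_mul] at h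
  exact h.symm

theorem coeff_mul_succ_eq_of_conj {i : ℕ} (hi : i < ℓ)
    (hconj : psComp (X * g) (normalForm ℓ μ) = psComp (normalForm ℓ ν) (X * g)) :
    coeff i g * (i + 1) = coeff i (g ^ (ℓ + 1)) := by
  have h := coeff_eq_of_conj hi.le hconj
  simp only [Derivation.leibniz, smul_eq_mul, derivative_X, mul_one, add_mul, one_mul, mul_assoc,
    map_add, coeff_X_mul_derivative, coeff_C_mul, coeff_X_pow_mul', not_le.mpr hi, if_false,
    mul_zero, add_zero] at h
  linear_combination h

theorem coeff_mul_succ_add_eq_of_conj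
    (hconj : psComp (X * g) (normalForm ℓ μ) = psComp (normalForm ℓ ν) (X * g)) :
    coeff ℓ g * (ℓ + 1) + μ * constantCoeff g =
      coeff ℓ (g ^ (ℓ + 1)) + ν * constantCoeff g ^ (2 * ℓ + 1) := by
  have h := coeff_eq_of_conj le_rfl hconj
  simp only [Derivation.leibniz, smul_eq_mul, derivative_X, mul_one, add_mul, one_mul, mul_assoc,
    map_add, coeff_X_mul_derivative, coeff_C_mul, coeff_X_pow_mul', le_refl, if_true, tsub_self,
    coeff_zero_eq_constantCoeff, map_pow] at h
  linear_combination h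

end NormalForm

section Conjugacy

variable {R : Type*} [CommRing R] [IsDomain R] {ℓ : ℕ} {μ ν : R} {g : R⟦X⟧}

theorem constantCoeff_pow_eq_one_of_conj (hℓ : 1 ≤ ℓ)
    (hconj : psComp (X * g) (normalForm ℓ μ) = psComp (normalForm ℓ ν) (X * g))
    (hc : constantCoeff g ≠ 0) : constantCoeff g ^ ℓ = 1 := by
  have h := coeff_mul_succ_eq_of_conj hℓ hconj
  simp only [Nat.cast_zero, zero_add, mul_one, coeff_zero_eq_constantCoeff, map_pow] at h
  exact mul_left_cancel₀ hc (by rw [mul_one, ← pow_succ', ← h])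

theorem coeff_eq_zero_of_conj [CharZero R]
    (hconj : psComp (X * g) (normalForm ℓ μ) = psComp (normalForm ℓ ν) (X * g))
    (hcℓ : constantCoeff g ^ ℓ = 1) {i : ℕ} (hi : 1 ≤ i) (hiℓ : i < ℓ) : coeff i g = 0 := by
  induction i using Nat.strong_induction_on with
  | _ i ih =>
  have h := coeff_mul_succ_eq_of_conj hiℓ hconj
  rw [coeff_pow_succ_of_coeff_eq_zero hi (fun j hj hji => ih j hji hj (hji.trans hiℓ)), hcℓ] at h
  have hne : (i : R) - ℓ ≠ 0 := sub_ne_zero.mpr (Nat.cast_injective.ne (by omega))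
  exact (mul_eq_zero.mp (by linear_combination h : coeff i g * ((i : R) - ℓ) = 0)).resolve_right hne

theorem eq_of_conj_normalForm [CharZero R] (hℓ : 1 ≤ ℓ)
    (hconj : psComp (X * g) (normalForm ℓ μ) = psComp (normalForm ℓ ν) (X * g))
    (hc : constantCoeff g ≠ 0) : μ = ν := by
  have hcℓ := constantCoeff_pow_eq_one_of_conj hℓ hconj hc
  have h := coeff_mul_succ_add_eq_of_conj hconj
  rw [coeff_pow_succ_of_coeff_eq_zero hℓ (fun j hj hjℓ => coeff_eq_zero_of_conj hconj hcℓ hj hjℓ),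
    show 2 * ℓ + 1 = ℓ + ℓ + 1 by ring, pow_succ, pow_add, hcℓ] at h
  exact mul_right_cancel₀ hc (by linear_combination h)

end Conjugacy

theorem stmt_3 {K : Type*} [Field K] [CharZero K] (ℓ : ℕ) (hℓ : 1 ≤ ℓ) (μ ν : K)
    (h : PowerSeries K)
    (h0 : PowerSeries.coeff 0 h = 0) (h1 : PowerSeries.coeff 1 h ≠ 0)
    (hconj : psComp h
        (PowerSeries.X + PowerSeries.X ^ (ℓ + 1)
          + PowerSeries.C μ * PowerSeries.X ^ (2 * ℓ + 1))
      = psComp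
        (PowerSeries.X + PowerSeries.X ^ (ℓ + 1)
          + PowerSeries.C ν * PowerSeries.X ^ (2 * ℓ + 1)) h) :
    μ = ν := by
  obtain ⟨g, rfl⟩ : X ∣ h := X_dvd_iff.mpr (by rwa [← coeff_zero_eq_constantCoeff_apply])
  rw [← zero_add 1, coeff_succ_X_mul, coeff_zero_eq_constantCoeff_apply] at h1
  exact eq_of_conj_normalForm hℓ hconj h1
end
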